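/- Let p be a positive Bernoulli distribution on {0,1}, let S ⊆ {0,1}* be a strategy, let a ∈ {0,1}, and let b, ε be real numbers with 0 < b ≤ 1 and ε > 0. Define H_n(b,ε) = { w ∈ {0,1}^n : |S(w)| > bn and | p(a) − #_a(S(w))/|S(w)| | ≥ ε }. Then μ_p(H_n(b,ε)) tends to 0 as n → ∞. -/

import Mathlib

/-!
Write `E_m g` for the `μ_p`-expectation of `g` over words of length `m`. Conditioning on the first
symbol, `S(c w)` is `S_c(w)`, possibly preceded by `c`, for the strategy
`S_c = {x | c :: x ∈ S}`; by induction, `E_n (g ∘ S) ≤ ∑_{m ≤ n} E_m g` for every `g ≥ 0`, so a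
selected word is no likelier to be bad than a fresh word of its length. For a fresh word `u` of
length `m` the centred count `#_a(u) - p(a) m` is a sum of independent centred terms bounded by `1`,
so its fourth moment is at most `3 m²` and Markov's inequality bounds the probability of an
`ε`-deviation of the frequency by `3 / (ε⁴ m²)`. Summing over `b n < m ≤ n` gives
`μ_p(H_n) ≤ 6 / (ε⁴ b² n)`.
-/

open Filter
open scoped Classical

/-- `μ_p(w)`: the probability of the finite word `w` under the Bernoulli distribution `p`. -/
def wordProb (p : Bool → ℝ) (w : List Bool) : ℝ := (w.map p).prod

/-- The word selected from `w` by the strategy `S ⊆ {0,1}*`: the symbols `w_j` (in order)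
such that the prefix `w_1 … w_(j-1)` belongs to `S`. -/
noncomputable def selectWord (S : Set (List Bool)) (w : List Bool) : List Bool :=
  (List.finRange w.length).filterMap fun (j : Fin w.length) =>
    if w.take (j : ℕ) ∈ S then some (w.get j) else none

lemma selectWord_cons (S : Set (List Bool)) (c : Bool) (v : List Bool) :
    selectWord S (c :: v) =
      (if [] ∈ S then [c] else []) ++ selectWord {x | c :: x ∈ S} v := by
  simp only [selectWord, List.length_cons, List.finRange_succ, List.filterMap_cons,
    List.filterMap_map]
  by_cases h : [] ∈ S <;> simp [h, Function.comp_def, List.take_succ_cons] <;> rfl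

lemma wordProb_nonneg {p : Bool → ℝ} (hp : ∀ c, 0 ≤ p c) (v : List Bool) :
    0 ≤ wordProb p v :=
  List.prod_nonneg fun _ hx => by
    obtain ⟨c, -, rfl⟩ := List.mem_map.mp hx
    exact hp c

def wordExpect (p : Bool → ℝ) (n : ℕ) (g : List Bool → ℝ) : ℝ :=
  ∑ w : Fin n → Bool, wordProb p (List.ofFn w) * g (List.ofFn w)

section wordExpect

variable {p : Bool → ℝ} {n : ℕ} {g h : List Bool → ℝ}

@[simp]
lemma wordExpect_zero (p : Bool → ℝ) (g : List Bool → ℝ) : wordExpect p 0 g = g [] := by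
  simp [wordExpect, wordProb]

lemma wordExpect_succ (p : Bool → ℝ) (n : ℕ) (g : List Bool → ℝ) :
    wordExpect p (n + 1) g = ∑ c, p c * wordExpect p n (fun v => g (c :: v)) := by
  simp only [wordExpect, Finset.mul_sum,
    ← (Fin.consEquiv fun _ => Bool).sum_comp, Fintype.sum_prod_type]
  simp [wordProb, List.ofFn_succ, mul_assoc]

lemma wordExpect_nonneg (hp : ∀ c, 0 ≤ p c) (hg : ∀ v, 0 ≤ g v) : 0 ≤ wordExpect p n g :=
  Finset.sum_nonneg fun _ _ => mul_nonneg (wordProb_nonneg hp _) (hg _)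

lemma wordExpect_mono (hp : ∀ c, 0 ≤ p c) (hgh : ∀ v : List Bool, v.length = n → g v ≤ h v) :
    wordExpect p n g ≤ wordExpect p n h :=
  Finset.sum_le_sum fun _ _ =>
    mul_le_mul_of_nonneg_left (hgh _ List.length_ofFn) (wordProb_nonneg hp _)

lemma wordExpect_div_const (g : List Bool → ℝ) (t : ℝ) :
    wordExpect p n (fun v => g v / t) = wordExpect p n g / t := by
  simp only [wordExpect, Finset.sum_div, mul_div_assoc]

end wordExpect

lemma sum_mul_le_one {p f : Bool → ℝ} (hp : ∀ c, 0 ≤ p c) (hp1 : ∑ c, p c = 1)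
    (hf : ∀ c, f c ≤ 1) : ∑ c, p c * f c ≤ 1 :=
  calc ∑ c, p c * f c ≤ ∑ c, p c * 1 :=
        Finset.sum_le_sum fun c _ => mul_le_mul_of_nonneg_left (hf c) (hp c)
    _ = 1 := by simp only [mul_one, hp1]

lemma wordExpect_one {p : Bool → ℝ} (hp1 : ∑ c, p c = 1) (n : ℕ) :
    wordExpect p n (fun _ => 1) = 1 := by
  induction n with
  | zero => simp
  | succ n ih => simp only [wordExpect_succ, ih, mul_one, hp1]

lemma wordExpect_comp_selectWord_le {p : Bool → ℝ} (hp : ∀ c, 0 ≤ p c)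
    (hp1 : ∑ c, p c = 1) (n : ℕ) (S : Set (List Bool)) (g : List Bool → ℝ)
    (hg : ∀ v, 0 ≤ g v) :
    wordExpect p n (fun w => g (selectWord S w)) ≤
      ∑ m ∈ Finset.range (n + 1), wordExpect p m g := by
  induction n generalizing S g with
  | zero => simp [selectWord]
  | succ n ih =>
    rw [wordExpect_succ]
    simp only [selectWord_cons]
    by_cases h0 : [] ∈ S
    · simp only [h0, if_true, List.singleton_append]
      calc ∑ c, p c * wordExpect p n (fun v => g (c :: selectWord {x | c :: x ∈ S} v))
          ≤ ∑ c, p c * ∑ m ∈ Finset.range (n + 1), wordExpect p m (fun v => g (c :: v)) :=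
            Finset.sum_le_sum fun c _ =>
              mul_le_mul_of_nonneg_left (ih _ (fun v => g (c :: v)) fun _ => hg _) (hp c)
        _ = ∑ m ∈ Finset.range (n + 1), wordExpect p (m + 1) g := by
            simp only [wordExpect_succ, Finset.mul_sum]
            exact Finset.sum_comm
        _ ≤ ∑ m ∈ Finset.range (n + 2), wordExpect p m g := by
            rw [Finset.sum_range_succ' _ (n + 1)]
            exact le_add_of_nonneg_right (wordExpect_nonneg hp hg)
    · simp only [h0, if_false, List.nil_append]
      calc ∑ c, p c * wordExpect p n (fun v => g (selectWord {x | c :: x ∈ S} v))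
          ≤ ∑ c, p c * ∑ m ∈ Finset.range (n + 1), wordExpect p m g :=
            Finset.sum_le_sum fun c _ => mul_le_mul_of_nonneg_left (ih _ g hg) (hp c)
        _ = ∑ m ∈ Finset.range (n + 1), wordExpect p m g := by
            rw [← Finset.sum_mul, hp1, one_mul]
        _ ≤ ∑ m ∈ Finset.range (n + 2), wordExpect p m g := by
            rw [Finset.sum_range_succ _ (n + 1)]
            exact le_add_of_nonneg_right (wordExpect_nonneg hp hg)

section Moments

variable {p : Bool → ℝ} (Y : Bool → ℝ)

lemma wordExpect_succ_sum_map_pow (n k : ℕ) :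
    wordExpect p (n + 1) (fun v => (v.map Y).sum ^ k) =
      ∑ j ∈ Finset.range (k + 1),
        k.choose j * wordExpect p n (fun v => (v.map Y).sum ^ j) * ∑ c, p c * Y c ^ (k - j) := by
  rw [wordExpect_succ]
  simp only [List.map_cons, List.sum_cons, add_comm (Y _), add_pow]
  simp only [wordExpect, Finset.mul_sum, Finset.sum_mul]
  conv_lhs => rw [Finset.sum_comm]; enter [2, w]; rw [Finset.sum_comm]
  rw [Finset.sum_comm]
  refine Finset.sum_congr rfl fun j _ => Finset.sum_comm.trans <|
    Finset.sum_congr rfl fun c _ => Finset.sum_congr rfl fun w _ => by ring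

lemma wordExpect_sum_map (hY0 : ∑ c, p c * Y c = 0) (n : ℕ) :
    wordExpect p n (fun v => (v.map Y).sum) = 0 := by
  induction n with
  | zero => simp
  | succ n ih =>
    have := wordExpect_succ_sum_map_pow (p := p) Y n 1
    simp only [Finset.sum_range_succ, Finset.sum_range_zero, Nat.reduceSub, Nat.choose, pow_zero,
      pow_one, ih, hY0] at this
    simpa using this

lemma wordExpect_sum_map_sq_le (hp : ∀ c, 0 ≤ p c) (hp1 : ∑ c, p c = 1)
    (hY0 : ∑ c, p c * Y c = 0) (hY1 : ∀ c, Y c ^ 2 ≤ 1) (n : ℕ) :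
    wordExpect p n (fun v => (v.map Y).sum ^ 2) ≤ n := by
  induction n with
  | zero => simp
  | succ n ih =>
    have hY2 := sum_mul_le_one hp hp1 hY1
    rw [wordExpect_succ_sum_map_pow]
    simp only [Finset.sum_range_succ, Finset.sum_range_zero, Nat.reduceSub, Nat.choose, pow_zero,
      pow_one, mul_one, wordExpect_sum_map Y hY0, wordExpect_one hp1, hp1, hY0]
    push_cast
    linarith

lemma wordExpect_sum_map_pow_four_le (hp : ∀ c, 0 ≤ p c) (hp1 : ∑ c, p c = 1)
    (hY0 : ∑ c, p c * Y c = 0) (hY1 : ∀ c, Y c ^ 2 ≤ 1) (n : ℕ) :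
    wordExpect p n (fun v => (v.map Y).sum ^ 4) ≤ 3 * n ^ 2 := by
  induction n with
  | zero => simp
  | succ n ih =>
    have hY2 := sum_mul_le_one hp hp1 hY1
    have hY4 := sum_mul_le_one (f := fun c => Y c ^ 4) hp hp1 fun c => by
      nlinarith [hY1 c, sq_nonneg (Y c)]
    have hG2 := wordExpect_sum_map_sq_le Y hp hp1 hY0 hY1 n
    have hG2' : 0 ≤ wordExpect p n (fun v => (v.map Y).sum ^ 2) :=
      wordExpect_nonneg hp fun v => sq_nonneg _
    rw [wordExpect_succ_sum_map_pow]
    simp only [Finset.sum_range_succ, Finset.sum_range_zero, Nat.reduceSub, Nat.choose, pow_zero,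
      pow_one, mul_one, wordExpect_sum_map Y hY0, wordExpect_one hp1, hp1, hY0]
    push_cast
    nlinarith [mul_le_of_le_one_right hG2' hY2]

end Moments

lemma ite_le_pow_four_div {ε : ℝ} (hε : 0 < ε) (x : ℝ) :
    (if ε ≤ |x| then 1 else 0 : ℝ) ≤ x ^ 4 / ε ^ 4 := by
  split_ifs with h
  · rw [one_le_div (by positivity), ← Even.pow_abs ⟨2, rfl⟩ x]
    exact pow_le_pow_left₀ hε.le h 4
  · positivity

lemma sum_map_indicator_sub (a : Bool) (q : ℝ) (u : List Bool) :
    (u.map fun c => (if c = a then 1 else 0) - q).sum = u.count a - q * u.length := by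
  induction u with
  | nil => simp
  | cons c u ih =>
    simp only [List.map_cons, List.sum_cons, ih, List.count_cons, List.length_cons]
    by_cases h : c = a <;> simp [h] <;> ring

lemma wordExpect_deviation_le {p : Bool → ℝ} (hp : ∀ c, 0 ≤ p c) (hp1 : ∑ c, p c = 1)
    (a : Bool) {ε : ℝ} (hε : 0 < ε) {m : ℕ} (hm : 0 < m) :
    wordExpect p m (fun u => if ε ≤ |p a - u.count a / u.length| then 1 else 0) ≤
      3 / (ε ^ 4 * m ^ 2) := by
  set Y : Bool → ℝ := fun c => (if c = a then 1 else 0) - p a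
  have hpa : p a ≤ 1 := hp1 ▸ Finset.single_le_sum (fun c _ => hp c) (Finset.mem_univ a)
  have hY0 : ∑ c, p c * Y c = 0 := by
    simp only [Y, mul_sub, Finset.sum_sub_distrib, ← Finset.sum_mul, hp1, mul_ite, mul_one,
      mul_zero, Finset.sum_ite_eq', Finset.mem_univ, if_true, one_mul, sub_self]
  have hY1 : ∀ c, Y c ^ 2 ≤ 1 := fun c => by
    by_cases h : c = a <;> simp only [Y, h, if_true, if_false] <;> nlinarith [hp a]
  calc wordExpect p m (fun u => if ε ≤ |p a - u.count a / u.length| then 1 else 0)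
      ≤ wordExpect p m (fun u => (u.map Y).sum ^ 4 / (ε * m) ^ 4) :=
        wordExpect_mono hp fun u hu => by
          convert ite_le_pow_four_div hε (p a - u.count a / u.length) using 1
          rw [sum_map_indicator_sub, hu]
          field_simp
          ring
    _ = wordExpect p m (fun u => (u.map Y).sum ^ 4) / (ε * m) ^ 4 := wordExpect_div_const _ _
    _ ≤ 3 * m ^ 2 / (ε * m) ^ 4 := by
        gcongr
        exact wordExpect_sum_map_pow_four_le Y hp hp1 hY0 hY1 m
    _ = 3 / (ε ^ 4 * m ^ 2) := by field_simp

lemma wordExpect_long_deviation_le {p : Bool → ℝ} (hp : ∀ c, 0 ≤ p c) (hp1 : ∑ c, p c = 1)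
    (a : Bool) {t ε : ℝ} (ht : 0 < t) (hε : 0 < ε) (m : ℕ) :
    wordExpect p m (fun u => if t < u.length ∧ ε ≤ |p a - u.count a / u.length| then 1 else 0) ≤
      3 / (ε ^ 4 * t ^ 2) := by
  by_cases htm : t < m
  · have hm : 0 < m := by exact_mod_cast ht.trans htm
    calc _ ≤ wordExpect p m (fun u => if ε ≤ |p a - u.count a / u.length| then 1 else 0) :=
          wordExpect_mono hp fun u _ => by split_ifs <;> simp_all
      _ ≤ 3 / (ε ^ 4 * m ^ 2) := wordExpect_deviation_le hp hp1 a hε hm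
      _ ≤ 3 / (ε ^ 4 * t ^ 2) := by gcongr
  · calc _ ≤ wordExpect p m (fun _ => 0) :=
          wordExpect_mono hp fun u hu => by simp [hu, htm]
      _ ≤ 3 / (ε ^ 4 * t ^ 2) := by
          simp only [wordExpect, mul_zero, Finset.sum_const_zero]
          positivity

theorem mu_H_tendsto_zero_general (p : Bool → ℝ) (hpos : ∀ a, 0 < p a)
    (hsum : p false + p true = 1)
    (S : Set (List Bool)) (a : Bool) (b ε : ℝ) (hb0 : 0 < b) (hε : 0 < ε) :
    Tendsto (fun n : ℕ =>
      ∑ w : Fin n → Bool,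
        if (b * n < ((selectWord S (List.ofFn w)).length : ℝ) ∧
            ε ≤ |p a - ((selectWord S (List.ofFn w)).count a : ℝ) /
                  ((selectWord S (List.ofFn w)).length : ℝ)|)
        then wordProb p (List.ofFn w) else 0)
      atTop (nhds 0) := by
  have hp : ∀ c, 0 ≤ p c := fun c => (hpos c).le
  have hp1 : ∑ c, p c = 1 := by rw [Fintype.sum_bool, add_comm, hsum]
  refine squeeze_zero' (Eventually.of_forall fun n =>
      Finset.sum_nonneg fun w _ => ite_nonneg (wordProb_nonneg hp _) le_rfl)
    (eventually_atTop.mpr ⟨1, fun n hn => ?_⟩)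
    (tendsto_const_div_atTop_nhds_zero_nat (6 / (ε ^ 4 * b ^ 2)))
  have hn' : (1 : ℝ) ≤ n := by exact_mod_cast hn
  have hbn : 0 < b * n := by positivity
  set bad : List Bool → ℝ :=
    fun u => if b * n < u.length ∧ ε ≤ |p a - u.count a / u.length| then 1 else 0
  calc _ = wordExpect p n (fun w => bad (selectWord S w)) := by
        simp only [wordExpect, bad, mul_ite, mul_one, mul_zero]
    _ ≤ ∑ m ∈ Finset.range (n + 1), wordExpect p m bad :=
        wordExpect_comp_selectWord_le hp hp1 n S bad fun _ => by positivity
    _ ≤ ∑ m ∈ Finset.range (n + 1), 3 / (ε ^ 4 * (b * n) ^ 2) :=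
        Finset.sum_le_sum fun m _ => wordExpect_long_deviation_le hp hp1 a hbn hε m
    _ = (n + 1) * (3 / (ε ^ 4 * (b * n) ^ 2)) := by simp
    _ ≤ 6 / (ε ^ 4 * b ^ 2) / n := by
        rw [div_div, le_div_iff₀ (by positivity)]
        field_simp
        nlinarith

/-- For `H_n(b,ε) = {w ∈ {0,1}^n : |S(w)| > b·n and |p(a) - #_a(S(w))/|S(w)|| ≥ ε}`, we have
`μ_p(H_n(b,ε)) → 0` as `n → ∞`. -/
theorem mu_H_tendsto_zero (p : Bool → ℝ) (hpos : ∀ a, 0 < p a)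
    (hsum : p false + p true = 1)
    (S : Set (List Bool)) (a : Bool) (b ε : ℝ) (hb0 : 0 < b) (hb1 : b ≤ 1) (hε : 0 < ε) :
    Tendsto (fun n : ℕ =>
      ∑ w : Fin n → Bool,
        if (b * n < ((selectWord S (List.ofFn w)).length : ℝ) ∧
            ε ≤ |p a - ((selectWord S (List.ofFn w)).count a : ℝ) /
                  ((selectWord S (List.ofFn w)).length : ℝ)|)
        then wordProb p (List.ofFn w) else 0)
      atTop (nhds 0) :=
  mu_H_tendsto_zero_general p hpos hsum S a b ε hb0 hε
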